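/- (Proposition 2.26, eq. (2.38): det_∞(s/(2π) − Φ̂_2/(2π)) = Γ_ℝ(s−1)^{-b_2}.) For every positive integer b and every real number s with 1 < s < 3, one has Complex.exp( − deriv (fun z : ℂ => (b : ℂ) * π^z * ζ_H((s−1)/2, z)) 0 ) = ( Real.sqrt 2 * π^(((s : ℂ) − 1)/2) / Γ(((s : ℂ) − 1)/2) )^b, i.e. the regularized determinant of the operator with spectrum {1 − 2n : n ≥ 0} (each eigenvalue of multiplicity b) equals Γ_ℝ(s−1)^{-b} = (2^{-1/2} π^{-(s−1)/2} Γ((s−1)/2))^{-b}. -/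

import Mathlib

/-!
With `a = (s - 1)/2 ∈ (0, 1]`, the claim reduces to Lerch's formulas `ζ(0, a) = 1/2 - a` and
`ζ'(0, a) = log Γ(a) - log(2π)/2`.

For these, `(z - 1) ζ(z, a)` is continued past `Re z = 1` by Euler–Maclaurin to first order:
it is the limit of `(z - 1) (∑_{n ≤ N} (n + a)^{-z} - (N + a)^{-z}/2) + (N + a)^{1-z}`, whose
increments are `(z - 1)` times trapezoidal-rule errors for `x^{-z}`, of size
`O(n^{-Re z - 2})`. The convergence is therefore uniform on a disc containing `0` and `2`, so the
limit is holomorphic there, equals `(z - 1) ζ(z, a)` by the identity theorem, and can be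
differentiated termwise. At `z = 0` the approximants equal `a - 1/2`, and their derivatives are
sums of logarithms which Euler's limit formula for `Γ` and Stirling's formula evaluate.
-/

open HurwitzZeta Complex Filter Topology Set

lemma hasDerivAt_ofReal_cpow_const_of_pos {x : ℝ} (hx : 0 < x) (w : ℂ) :
    HasDerivAt (fun y : ℝ => (y : ℂ) ^ w) (w * (x : ℂ) ^ (w - 1)) x := by
  simpa using
    ((hasDerivAt_id (x : ℂ)).cpow_const (c := w) (Or.inl (by simpa using hx))).comp_ofReal

lemma tendsto_ofReal_cpow_atTop_zero {w : ℂ} (hw : w.re < 0) :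
    Tendsto (fun x : ℝ => (x : ℂ) ^ w) atTop (𝓝 0) := by
  rw [tendsto_zero_iff_norm_tendsto_zero]
  refine (tendsto_rpow_neg_atTop (neg_pos.2 hw)).congr' ?_
  filter_upwards [eventually_gt_atTop 0] with x hx
  rw [norm_cpow_eq_rpow_re_of_pos hx, neg_neg]

lemma norm_le_of_norm_second_deriv_le {E : Type*} [NormedAddCommGroup E] [NormedSpace ℝ E]
    {f f' f'' : ℝ → E} {a b M : ℝ} (hf : ∀ x ∈ Icc a b, HasDerivAt f (f' x) x)
    (hf' : ∀ x ∈ Icc a b, HasDerivAt f' (f'' x) x) (hfa : f a = 0) (hf'a : f' a = 0)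
    (hM : ∀ x ∈ Ico a b, ‖f'' x‖ ≤ M) {x : ℝ} (hx : x ∈ Icc a b) :
    ‖f x‖ ≤ M * (x - a) ^ 2 / 2 := by
  have hf'_le : ∀ x ∈ Icc a b, ‖f' x‖ ≤ M * (x - a) :=
    image_norm_le_of_norm_deriv_right_le_deriv_boundary
      (fun y hy => (hf' y hy).continuousAt.continuousWithinAt)
      (fun y hy => (hf' y (Ico_subset_Icc_self hy)).hasDerivWithinAt) (by simp [hf'a])
      (fun y => by simpa using ((hasDerivAt_id y).sub_const a).const_mul M) hM
  refine image_norm_le_of_norm_deriv_right_le_deriv_boundary (B := fun y => M * (y - a) ^ 2 / 2)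
    (fun y hy => (hf y hy).continuousAt.continuousWithinAt)
    (fun y hy => (hf y (Ico_subset_Icc_self hy)).hasDerivWithinAt) (by simp [hfa])
    (fun y => ?_) (fun y hy => hf'_le y (Ico_subset_Icc_self hy)) hx
  refine (((((hasDerivAt_id y).sub_const a).fun_pow 2).const_mul M).div_const 2).congr_deriv ?_
  simp only [id]
  ring

lemma rpow_le_rpow_add_rpow {c p q r : ℝ} (hc : 0 < c) (hpq : p ≤ q) (hqr : q ≤ r) :
    c ^ q ≤ c ^ p + c ^ r := by
  rcases le_total 1 c with h | h
  · exact (Real.rpow_le_rpow_of_exponent_le h hqr).trans (le_add_of_nonneg_left (by positivity))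
  · exact (Real.rpow_le_rpow_of_exponent_ge hc h hpq).trans
      (le_add_of_nonneg_right (by positivity))

lemma summable_nat_add_rpow_neg {a s : ℝ} (ha : 0 < a) (hs : 1 < s) :
    Summable fun n : ℕ => ((n : ℝ) + a) ^ (-s) := by
  refine ((Real.summable_one_div_nat_add_rpow a s).2 hs).congr fun n => ?_
  rw [abs_of_pos (by positivity), Real.rpow_neg (by positivity), one_div]

lemma tendsto_mul_log_add_sub_log (a : ℝ) :
    Tendsto (fun N : ℕ => ((N : ℝ) + a + 1 / 2) * (Real.log (N + a) - Real.log N)) atTop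
      (𝓝 a) := by
  have hN : Tendsto (fun N : ℕ => (N : ℝ)) atTop atTop := tendsto_natCast_atTop_atTop
  have hlog : Tendsto (fun N : ℕ => Real.log (1 + a / N)) atTop (𝓝 0) := by
    have h := (tendsto_const_nhds (x := (1 : ℝ))).add ((tendsto_const_nhds (x := a)).div_atTop hN)
    rw [add_zero] at h
    simpa only [Real.log_one] using h.log one_ne_zero
  have hlim := ((Real.tendsto_mul_log_one_add_div_atTop a).comp hN).add (hlog.const_mul (a + 1 / 2))
  rw [mul_zero, add_zero] at hlim
  refine hlim.congr' ?_
  filter_upwards [eventually_gt_atTop 0, hN.eventually_gt_atTop (-a)] with N hN0 hNa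
  have hN0' : (0 : ℝ) < N := Nat.cast_pos.2 hN0
  rw [Function.comp_apply, ← Real.log_div (by linarith) hN0'.ne',
    show (1 : ℝ) + a / N = (N + a) / N by field_simp]
  ring

namespace HurwitzZeta

/-- `(z - 1)` times the error of the trapezoidal rule for `∫_c^{c+1} x^{-z} dx`. -/
noncomputable def trapezoidError (z : ℂ) (c : ℝ) : ℂ :=
  (z - 1) * ((c : ℂ) ^ (-z) + ((c + 1 : ℝ) : ℂ) ^ (-z)) / 2
    + (((c + 1 : ℝ) : ℂ) ^ (1 - z) - (c : ℂ) ^ (1 - z))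

lemma norm_trapezoidError_le {c : ℝ} (hc : 0 < c) {z : ℂ} (hz : -2 < z.re) :
    ‖trapezoidError z c‖ ≤ ‖z - 1‖ * ‖z‖ * ‖z + 1‖ / 4 * c ^ (-(z.re + 2)) := by
  -- `F x` is the error on `[c, x]`; it vanishes to second order at `x = c`.
  let F : ℝ → ℂ := fun x =>
    (z - 1) * ((x - c : ℝ) * ((c : ℂ) ^ (-z) + (x : ℂ) ^ (-z))) / 2
      + ((x : ℂ) ^ (1 - z) - (c : ℂ) ^ (1 - z))
  let F' : ℝ → ℂ := fun x =>
    (z - 1) * ((c : ℂ) ^ (-z) - (x : ℂ) ^ (-z) - z * (x - c : ℝ) * (x : ℂ) ^ (-z - 1)) / 2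
  let F'' : ℝ → ℂ := fun x => (z - 1) * z * (z + 1) * (x - c : ℝ) * (x : ℂ) ^ (-z - 2) / 2
  have hsub (x : ℝ) : HasDerivAt (fun y : ℝ => ((y - c : ℝ) : ℂ)) 1 x := by
    simpa using ((hasDerivAt_id x).sub_const c).ofReal_comp
  have hF : ∀ x ∈ Icc c (c + 1), HasDerivAt F (F' x) x := fun x hx => by
    have hx0 : 0 < x := hc.trans_le hx.1
    have h1 := hasDerivAt_ofReal_cpow_const_of_pos hx0 (1 - z)
    rw [sub_sub_cancel_left] at h1
    refine (((((hsub x).mul ((hasDerivAt_ofReal_cpow_const_of_pos hx0 (-z)).const_add _)).const_mul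
      (z - 1)).div_const 2).add (h1.sub_const _)).congr_deriv ?_
    ring
  have hF' : ∀ x ∈ Icc c (c + 1), HasDerivAt F' (F'' x) x := fun x hx => by
    have hx0 : 0 < x := hc.trans_le hx.1
    have h2 := hasDerivAt_ofReal_cpow_const_of_pos hx0 (-z - 1)
    rw [show -z - 1 - 1 = -z - 2 by ring] at h2
    refine ((((hasDerivAt_ofReal_cpow_const_of_pos hx0 (-z)).const_sub _).sub
      (((hsub x).const_mul z).mul h2)).const_mul (z - 1) |>.div_const 2).congr_deriv ?_
    ring
  have hF'' : ∀ x ∈ Ico c (c + 1),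
      ‖F'' x‖ ≤ ‖z - 1‖ * ‖z‖ * ‖z + 1‖ / 2 * c ^ (-(z.re + 2)) := fun x hx => by
    have hx0 : 0 < x := hc.trans_le hx.1
    have hpow : x ^ (-z - 2).re ≤ c ^ (-(z.re + 2)) := by
      rw [show (-z - 2).re = -(z.re + 2) by simp; ring]
      exact Real.rpow_le_rpow_of_nonpos hc hx.1 (by linarith)
    have hxc : |x - c| ≤ 1 := abs_le.2 ⟨by linarith [hx.1], by linarith [hx.2]⟩
    simp only [F'', norm_div, norm_mul, Complex.norm_real, Real.norm_eq_abs,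
      norm_cpow_eq_rpow_re_of_pos hx0, RCLike.norm_ofNat]
    have hprod : |x - c| * x ^ (-z - 2).re ≤ c ^ (-(z.re + 2)) := by
      simpa using mul_le_mul hxc hpow (by positivity) zero_le_one
    have := mul_le_mul_of_nonneg_left hprod
      (by positivity : 0 ≤ ‖z - 1‖ * ‖z‖ * ‖z + 1‖ / 2)
    linarith
  have key := norm_le_of_norm_second_deriv_le hF hF' (by simp [F]) (by simp [F']) hF''
    (right_mem_Icc.2 (by linarith))
  have hF1 : F (c + 1) = trapezoidError z c := by
    simp only [F, trapezoidError, add_sub_cancel_left, Complex.ofReal_one, one_mul]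
  rw [← hF1]
  refine key.trans_eq ?_
  ring

/-- On this ball, which contains `0` and `2`, `Re z > -1/2`: the bound is summable along
`c = n + a`. -/
lemma norm_trapezoidError_le_of_mem_ball {c : ℝ} (hc : 0 < c) {z : ℂ}
    (hz : z ∈ Metric.ball (1 : ℂ) (3 / 2)) :
    ‖trapezoidError z c‖ ≤ 6 * (c ^ (-(3 / 2) : ℝ) + c ^ (-(9 / 2) : ℝ)) := by
  rw [Metric.mem_ball, dist_eq_norm] at hz
  have hre : |z.re - 1| < 3 / 2 := by simpa using (abs_re_le_norm (z - 1)).trans_lt hz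
  have hz0 : ‖z‖ ≤ 3 := by
    simpa using (norm_le_norm_add_norm_sub' z 1).trans (by rw [norm_one]; linarith)
  have hz1 : ‖z + 1‖ ≤ 4 := (norm_add_le _ _).trans (by rw [norm_one]; linarith)
  refine (norm_trapezoidError_le hc (by linarith [(abs_lt.1 hre).1])).trans ?_
  calc ‖z - 1‖ * ‖z‖ * ‖z + 1‖ / 4 * c ^ (-(z.re + 2))
      ≤ 2 * 3 * 4 / 4 * (c ^ (-(9 / 2) : ℝ) + c ^ (-(3 / 2) : ℝ)) := by
        gcongr
        · linarith
        · exact rpow_le_rpow_add_rpow hc (by linarith [(abs_lt.1 hre).2])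
            (by linarith [(abs_lt.1 hre).1])
    _ = _ := by ring

/-- `(z - 1) (∑_{n ≤ N} f(n + a) - f(N + a)/2 + ∫_{N+a}^∞ f)` for `f(x) = x^{-z}`, when
`Re z > 1`. -/
noncomputable def hurwitzApprox (a : ℝ) (N : ℕ) (z : ℂ) : ℂ :=
  (z - 1) * (∑ n ∈ Finset.range (N + 1), ((n + a : ℝ) : ℂ) ^ (-z)
      - ((N + a : ℝ) : ℂ) ^ (-z) / 2)
    + ((N + a : ℝ) : ℂ) ^ (1 - z)

lemma hurwitzApprox_succ (a : ℝ) (N : ℕ) (z : ℂ) :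
    hurwitzApprox a (N + 1) z = hurwitzApprox a N z + trapezoidError z (N + a) := by
  simp only [hurwitzApprox, trapezoidError, Finset.sum_range_succ (n := N + 1)]
  rw [show ((N + 1 : ℕ) : ℝ) + a = N + a + 1 by push_cast; ring]
  ring

lemma hurwitzApprox_eq_add_sum (a : ℝ) (N : ℕ) (z : ℂ) :
    hurwitzApprox a N z
      = hurwitzApprox a 0 z + ∑ n ∈ Finset.range N, trapezoidError z (n + a) := by
  induction N with
  | zero => simp
  | succ N ih => rw [hurwitzApprox_succ, ih, Finset.sum_range_succ, add_assoc]

lemma differentiable_hurwitzApprox {a : ℝ} (ha : 0 < a) (N : ℕ) :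
    Differentiable ℂ (hurwitzApprox a N) := by
  have hne (n : ℕ) : ((n + a : ℝ) : ℂ) ≠ 0 := ofReal_ne_zero.2 (by positivity)
  unfold hurwitzApprox
  fun_prop (disch := exact Or.inl (hne _))

noncomputable def hurwitzApproxLimit (a : ℝ) (z : ℂ) : ℂ :=
  hurwitzApprox a 0 z + ∑' n : ℕ, trapezoidError z (n + a)

lemma tendstoUniformlyOn_hurwitzApprox {a : ℝ} (ha : 0 < a) :
    TendstoUniformlyOn (hurwitzApprox a) (hurwitzApproxLimit a) atTop
      (Metric.ball 1 (3 / 2)) := by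
  have hsum : Summable fun n : ℕ =>
      6 * (((n : ℝ) + a) ^ (-(3 / 2) : ℝ) + ((n : ℝ) + a) ^ (-(9 / 2) : ℝ)) :=
    ((summable_nat_add_rpow_neg ha (by norm_num)).add
      (summable_nat_add_rpow_neg ha (by norm_num))).mul_left 6
  have := (tendstoUniformlyOn_tsum_nat hsum fun n z hz =>
    norm_trapezoidError_le_of_mem_ball (by positivity) hz)
  rw [Metric.tendstoUniformlyOn_iff] at this ⊢
  intro ε hε
  filter_upwards [this ε hε] with N hN z hz
  rw [hurwitzApproxLimit, hurwitzApprox_eq_add_sum a N z, dist_add_left]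
  exact hN z hz

lemma differentiableOn_hurwitzApproxLimit {a : ℝ} (ha : 0 < a) :
    DifferentiableOn ℂ (hurwitzApproxLimit a) (Metric.ball 1 (3 / 2)) :=
  (tendstoUniformlyOn_hurwitzApprox ha).tendstoLocallyUniformlyOn.differentiableOn
    (.of_forall fun N => (differentiable_hurwitzApprox ha N).differentiableOn) Metric.isOpen_ball

lemma tendsto_hurwitzApprox_of_one_lt_re {a : ℝ} (ha : 0 < a) (ha1 : a ≤ 1) {z : ℂ}
    (hz : 1 < z.re) :
    Tendsto (fun N => hurwitzApprox a N z) atTop (𝓝 ((z - 1) * hurwitzZeta a z)) := by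
  have hζ : HasSum (fun n : ℕ => ((n + a : ℝ) : ℂ) ^ (-z)) (hurwitzZeta a z) := by
    convert hasSum_hurwitzZeta_of_one_lt_re ⟨ha.le, ha1⟩ hz using 2 with n
    rw [cpow_neg, one_div]
    push_cast
    rfl
  have htail {w : ℂ} (hw : w.re < 0) :
      Tendsto (fun N : ℕ => ((N + a : ℝ) : ℂ) ^ w) atTop (𝓝 0) :=
    (tendsto_ofReal_cpow_atTop_zero hw).comp
      (tendsto_atTop_add_const_right _ a tendsto_natCast_atTop_atTop)
  have hlim := (((hζ.tendsto_sum_nat.comp (tendsto_add_atTop_nat 1)).sub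
    ((htail (w := -z) (by simp; linarith)).div_const 2)).const_mul (z - 1)).add
    (htail (w := 1 - z) (by simp; linarith))
  rw [zero_div, sub_zero, add_zero] at hlim
  exact hlim

lemma differentiable_update_sub_one_mul_hurwitzZeta (a : UnitAddCircle) :
    Differentiable ℂ (Function.update (fun z => (z - 1) * hurwitzZeta a z) 1 1) := by
  rw [← differentiableOn_univ,
    ← Complex.differentiableOn_compl_singleton_and_continuousAt_iff univ_mem]
  refine ⟨fun z hz => ?_, continuousAt_update_same.2 (hurwitzZeta_residue_one a)⟩
  have hz1 : z ≠ 1 := hz.2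
  refine (((differentiableAt_id.sub_const 1).mul
    (differentiableAt_hurwitzZeta a hz1)).congr_of_eventuallyEq ?_).differentiableWithinAt
  filter_upwards [isOpen_ne.mem_nhds hz1] with w hw
  exact Function.update_of_ne hw _ _

lemma hurwitzApproxLimit_eq_sub_one_mul_hurwitzZeta {a : ℝ} (ha : 0 < a) (ha1 : a ≤ 1) {z : ℂ}
    (hz : z ∈ Metric.ball (1 : ℂ) (3 / 2)) (hz1 : z ≠ 1) :
    hurwitzApproxLimit a z = (z - 1) * hurwitzZeta a z := by
  have h2 : (2 : ℂ) ∈ Metric.ball (1 : ℂ) (3 / 2) := by norm_num [dist_eq_norm]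
  have hnear : hurwitzApproxLimit a =ᶠ[𝓝 2]
      Function.update (fun z => (z - 1) * hurwitzZeta a z) 1 1 := by
    filter_upwards [Metric.isOpen_ball.mem_nhds h2,
      (isOpen_lt continuous_const continuous_re).mem_nhds
        (show (1 : ℝ) < (2 : ℂ).re by norm_num)]
      with w hw hw1
    rw [Function.update_of_ne (by rintro rfl; simp at hw1)]
    exact tendsto_nhds_unique ((tendstoUniformlyOn_hurwitzApprox ha).tendsto_at hw)
      (tendsto_hurwitzApprox_of_one_lt_re ha ha1 hw1)
  have := ((differentiableOn_hurwitzApproxLimit ha).analyticOnNhd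
    Metric.isOpen_ball).eqOn_of_preconnected_of_eventuallyEq
    ((differentiable_update_sub_one_mul_hurwitzZeta a).differentiableOn.analyticOnNhd
      Metric.isOpen_ball) (convex_ball _ _).isPreconnected h2 hnear hz
  rwa [Function.update_of_ne hz1] at this

lemma hurwitzApprox_apply_zero (a : ℝ) (N : ℕ) : hurwitzApprox a N 0 = a - 1 / 2 := by
  simp [hurwitzApprox]
  ring

lemma hurwitzApproxLimit_apply_zero {a : ℝ} (ha : 0 < a) :
    hurwitzApproxLimit a 0 = a - 1 / 2 := by
  refine tendsto_nhds_unique ((tendstoUniformlyOn_hurwitzApprox ha).tendsto_at ?_) ?_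
  · norm_num [dist_eq_norm]
  · simp only [hurwitzApprox_apply_zero, tendsto_const_nhds]

/-- `∑_{n ≤ N} log (n + a) = log (Γ(N + 1 + a) / Γ(a))`, and the other terms are Stirling's
approximation to `log Γ(N + 1 + a) - log(2π)/2`. -/
noncomputable def lerchSeq (a : ℝ) (N : ℕ) : ℝ :=
  (N + a) * Real.log (N + a) - (N + a) + Real.log (N + a) / 2
    - ∑ n ∈ Finset.range (N + 1), Real.log (n + a)

lemma tendsto_lerchSeq {a : ℝ} (ha : 0 < a) :
    Tendsto (lerchSeq a) atTop (𝓝 (Real.log (Real.Gamma a) - Real.log (2 * Real.pi) / 2)) := by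
  have hΓ := Real.BohrMollerup.tendsto_log_gamma ha
  have hS : Tendsto (fun N => Real.log (Stirling.stirlingSeq N)) atTop
      (𝓝 (Real.log Real.pi / 2)) := by
    rw [← Real.log_sqrt Real.pi_pos.le]
    exact Stirling.tendsto_stirlingSeq_sqrt_pi.log (by positivity)
  have hlim := ((hΓ.sub hS).add ((tendsto_mul_log_add_sub_log a).sub_const a)).sub_const
    (Real.log 2 / 2)
  rw [sub_self, add_zero, sub_sub, ← add_div, add_comm (Real.log Real.pi),
    ← Real.log_mul two_ne_zero Real.pi_pos.ne'] at hlim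
  refine hlim.congr' ?_
  filter_upwards [eventually_ne_atTop 0] with N hN
  have hN0 : (N : ℝ) ≠ 0 := Nat.cast_ne_zero.2 hN
  rw [Real.BohrMollerup.logGammaSeq, Stirling.log_stirlingSeq_formula, lerchSeq,
    Real.log_mul two_ne_zero hN0, Real.log_div hN0 (Real.exp_pos 1).ne', Real.log_exp]
  simp only [add_comm a]
  ring

lemma neg_deriv_hurwitzApprox_zero_sub {a : ℝ} (ha : 0 < a) (N : ℕ) :
    -deriv (hurwitzApprox a N) 0 - hurwitzApprox a N 0 = lerchSeq a N := by
  have hne (n : ℕ) : ((n + a : ℝ) : ℂ) ≠ 0 := ofReal_ne_zero.2 (by positivity)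
  have hlog (n : ℕ) : Complex.log ((n + a : ℝ) : ℂ) = (Real.log (n + a) : ℂ) :=
    (ofReal_log (by positivity)).symm
  have hneg := hasDerivAt_neg (0 : ℂ)
  have hsub := (hasDerivAt_id (0 : ℂ)).const_sub (1 : ℂ)
  have hderiv : HasDerivAt (hurwitzApprox a N) _ 0 :=
    (((hasDerivAt_id 0).sub_const 1).fun_mul ((HasDerivAt.fun_sum fun n _ =>
      hneg.const_cpow (Or.inl (hne n))).fun_sub
        ((hneg.const_cpow (Or.inl (hne N))).div_const 2))).fun_add
      (hsub.const_cpow (Or.inl (hne N)))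
  rw [hderiv.deriv, hurwitzApprox_apply_zero, lerchSeq]
  simp only [id, neg_zero, cpow_zero, sub_zero, cpow_one, hlog, one_mul, Finset.sum_const,
    Finset.card_range, nsmul_eq_mul, ← Finset.sum_mul]
  push_cast
  ring

theorem hurwitzZeta_eventuallyEq_hurwitzApproxLimit_div {a : ℝ} (ha : 0 < a) (ha1 : a ≤ 1) :
    (hurwitzZeta a : ℂ → ℂ) =ᶠ[𝓝 0] fun z => hurwitzApproxLimit a z / (z - 1) := by
  have h0 : (0 : ℂ) ∈ Metric.ball (1 : ℂ) (3 / 2) := by norm_num [dist_eq_norm]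
  filter_upwards [Metric.isOpen_ball.mem_nhds h0, isOpen_ne.mem_nhds (zero_ne_one' ℂ)]
    with z hz hz1
  rw [hurwitzApproxLimit_eq_sub_one_mul_hurwitzZeta ha ha1 hz hz1,
    mul_div_cancel_left₀ _ (sub_ne_zero.2 hz1)]

theorem hurwitzZeta_zero_of_pos_of_le_one {a : ℝ} (ha : 0 < a) (ha1 : a ≤ 1) :
    hurwitzZeta a 0 = 1 / 2 - a := by
  rw [(hurwitzZeta_eventuallyEq_hurwitzApproxLimit_div ha ha1).eq_of_nhds,
    hurwitzApproxLimit_apply_zero ha]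
  ring

theorem hasDerivAt_hurwitzZeta_zero {a : ℝ} (ha : 0 < a) (ha1 : a ≤ 1) :
    HasDerivAt (hurwitzZeta a) (Real.log (Real.Gamma a) - Real.log (2 * Real.pi) / 2 : ℝ) 0 := by
  have h0 : (0 : ℂ) ∈ Metric.ball (1 : ℂ) (3 / 2) := by norm_num [dist_eq_norm]
  have hG := (differentiableOn_hurwitzApproxLimit ha).differentiableAt
    (Metric.isOpen_ball.mem_nhds h0)
  have hdiv := hG.hasDerivAt.div ((hasDerivAt_id (0 : ℂ)).sub_const 1) (by norm_num)
  refine (hdiv.congr_of_eventuallyEq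
    (hurwitzZeta_eventuallyEq_hurwitzApproxLimit_div ha ha1)).congr_deriv ?_
  have hlim : Tendsto (fun N => (lerchSeq a N : ℂ)) atTop
      (𝓝 (-deriv (hurwitzApproxLimit a) 0 - hurwitzApproxLimit a 0)) := by
    have hU := (tendstoUniformlyOn_hurwitzApprox ha).tendstoLocallyUniformlyOn
    refine ((((hU.deriv (.of_forall fun N => (differentiable_hurwitzApprox ha N).differentiableOn)
      Metric.isOpen_ball).tendsto_at h0).neg).sub (hU.tendsto_at h0)).congr fun N => ?_
    exact neg_deriv_hurwitzApprox_zero_sub ha N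
  rw [← tendsto_nhds_unique hlim ((continuous_ofReal.tendsto _).comp (tendsto_lerchSeq ha))]
  simp only [id]
  ring

lemma log_sqrt_two_mul_pi_rpow_div_Gamma {a : ℝ} (ha : 0 < a) :
    Real.log (Real.sqrt 2 * Real.pi ^ a / Real.Gamma a)
      = -(Real.log Real.pi * (1 / 2 - a)
          + (Real.log (Real.Gamma a) - Real.log (2 * Real.pi) / 2)) := by
  rw [Real.log_div (by positivity) (Real.Gamma_pos_of_pos ha).ne',
    Real.log_mul (by positivity) (by positivity), Real.log_sqrt zero_le_two,
    Real.log_rpow Real.pi_pos, Real.log_mul two_ne_zero Real.pi_pos.ne']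
  ring

theorem hasDerivAt_pi_cpow_mul_hurwitzZeta_zero {a : ℝ} (ha : 0 < a) (ha1 : a ≤ 1) :
    HasDerivAt (fun z : ℂ => (Real.pi : ℂ) ^ z * hurwitzZeta a z)
      (-Real.log (Real.sqrt 2 * Real.pi ^ a / Real.Gamma a) : ℝ) 0 := by
  have hπ : HasDerivAt (fun z : ℂ => (Real.pi : ℂ) ^ z) (Real.log Real.pi : ℂ) 0 := by
    simpa [← ofReal_log Real.pi_pos.le] using (hasDerivAt_id (0 : ℂ)).const_cpow
      (c := (Real.pi : ℂ)) (Or.inl (ofReal_ne_zero.2 Real.pi_ne_zero))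
  refine (hπ.fun_mul (hasDerivAt_hurwitzZeta_zero ha ha1)).congr_deriv ?_
  rw [hurwitzZeta_zero_of_pos_of_le_one ha ha1, log_sqrt_two_mul_pi_rpow_div_Gamma ha,
    cpow_zero]
  push_cast
  ring

end HurwitzZeta

theorem regularized_det_Phi_hat_two_general (b : ℕ) (s : ℝ) (hs1 : 1 < s) (hs3 : s < 3) :
    Complex.exp (- deriv (fun z : ℂ =>
        (b : ℂ) * ((Real.pi : ℝ) : ℂ) ^ z *
          hurwitzZeta (((s - 1) / 2 : ℝ) : UnitAddCircle) z) 0) =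
      ((Real.sqrt 2 : ℂ) * ((Real.pi : ℝ) : ℂ) ^ (((s : ℂ) - 1) / 2) /
        Complex.Gamma (((s : ℂ) - 1) / 2)) ^ b := by
  set a : ℝ := (s - 1) / 2
  have ha : 0 < a := by simp only [a]; linarith
  have ha1 : a ≤ 1 := by simp only [a]; linarith
  have hD := (hasDerivAt_pi_cpow_mul_hurwitzZeta_zero ha ha1).const_mul (b : ℂ)
  simp_rw [mul_assoc]
  rw [hD.deriv, ofReal_neg, mul_neg, neg_neg, Complex.exp_nat_mul, ← ofReal_exp,
    Real.exp_log (by positivity)]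
  have ha' : ((s : ℂ) - 1) / 2 = (a : ℂ) := by push_cast [a]; ring
  rw [ha', Complex.Gamma_ofReal, ← ofReal_cpow Real.pi_pos.le]
  push_cast
  rfl

/-- Proposition 2.26, eq. (2.38): the zeta-regularized determinant
`det_∞(s/(2π) − Φ̂_2/(2π))` equals `Γ_ℝ(s−1)^{-b_2}`, where `Φ̂_2` has spectrum
`{1 − 2n : n ≥ 0}`, each eigenvalue of multiplicity `b = b_2`, so that its zeta function is
`b π^z ζ_H((s−1)/2, z)`, and `Γ_ℝ(s−1) = 2^{-1/2} π^{-(s−1)/2} Γ((s−1)/2)`. -/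
theorem regularized_det_Phi_hat_two (b : ℕ) (hb : 0 < b) (s : ℝ) (hs1 : 1 < s) (hs3 : s < 3) :
    Complex.exp (- deriv (fun z : ℂ =>
        (b : ℂ) * ((Real.pi : ℝ) : ℂ) ^ z *
          hurwitzZeta (((s - 1) / 2 : ℝ) : UnitAddCircle) z) 0) =
      ((Real.sqrt 2 : ℂ) * ((Real.pi : ℝ) : ℂ) ^ (((s : ℂ) - 1) / 2) /
        Complex.Gamma (((s : ℂ) - 1) / 2)) ^ b :=
  regularized_det_Phi_hat_two_general b s hs1 hs3
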